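/- arXiv:1508.06558 — 5 statements merged into one kernel-verified Lean document; each statement's English description precedes it below -/
import Mathlib

section
/- Let s_1, ..., s_k be positive integers and for 1 ≤ t ≤ k define L_t = lcm of all products ∏_{i∈I} s_i over subsets I of {1,...,k} of size t. Then L_t divides L_{t+1} for all 1 ≤ t ≤ k-1. -/
namespace Finset

variable {α β : Type*} [CommMonoidWithZero β] [NormalizedGCDMonoid β]

/-- Every `t`-subset of `s` extends to a `(t+1)`-subset, whose product it divides. -/
theorem lcm_powersetCard_prod_dvd_succ (s : Finset α) (f : α → β) {t : ℕ} (ht : t < #s) :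
    (s.powersetCard t).lcm (fun I => ∏ i ∈ I, f i) ∣
      (s.powersetCard (t + 1)).lcm (fun I => ∏ i ∈ I, f i) := by
  refine Finset.lcm_dvd fun I hI => ?_
  obtain ⟨hIs, hIcard⟩ := mem_powersetCard.mp hI
  obtain ⟨J, hIJ, hJs, hJcard⟩ :=
    exists_subsuperset_card_eq hIs (n := t + 1) (by omega) (by omega)
  exact (prod_dvd_prod_of_subset I J f hIJ).trans
    (dvd_lcm (mem_powersetCard.mpr ⟨hJs, hJcard⟩))

end Finset

theorem L_dvd_L_succ_general (k : ℕ) (s : Fin k → ℕ)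
    (t : ℕ) (h1 : 1 ≤ t) (h2 : t ≤ k - 1) :
    ((Finset.univ : Finset (Fin k)).powersetCard t).lcm (fun I => ∏ i ∈ I, s i) ∣
      ((Finset.univ : Finset (Fin k)).powersetCard (t + 1)).lcm (fun I => ∏ i ∈ I, s i) :=
  Finset.lcm_powersetCard_prod_dvd_succ Finset.univ s
    (by rw [Finset.card_univ, Fintype.card_fin]; omega)

theorem L_dvd_L_succ (k : ℕ) (s : Fin k → ℕ) (hs : ∀ i, 0 < s i)
    (t : ℕ) (h1 : 1 ≤ t) (h2 : t ≤ k - 1) :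
    ((Finset.univ : Finset (Fin k)).powersetCard t).lcm (fun I => ∏ i ∈ I, s i) ∣
      ((Finset.univ : Finset (Fin k)).powersetCard (t + 1)).lcm (fun I => ∏ i ∈ I, s i) :=
  L_dvd_L_succ_general k s t h1 h2
end

section
/- Let s_1, ..., s_k be positive integers, L_t = lcm over t-element subsets I of {1,...,k} of ∏_{i∈I} s_i, and e_J = gcd(s_i : i ∈ J). Then for every 1 ≤ t ≤ k-1, L_t = lcm over (t+1)-element subsets J of {1,...,k} of (∏_{i∈J} s_i)/e_J. -/
/-!
Write `L` for the lcm of the `t`-fold products. If `I` has `t` elements and `j ∉ I`, then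
`e_{I ∪ {j}}` divides `s j`, so `∏_I s` divides `(∏_{I ∪ {j}} s) / e_{I ∪ {j}}`; this gives `L` dividing
the right-hand side. Conversely, if `J` has `t + 1` elements then `∏_J s = s i * ∏_{J \ {i}} s`
divides `s i * L` for every `i ∈ J`, hence divides `gcd_{i ∈ J} (s i * L) = e_J * L`.
-/

namespace Finset

variable {ι α : Type*}

theorem prod_dvd_gcd_mul_of_prod_erase_dvd [CommMonoidWithZero α] [NormalizedGCDMonoid α]
    [DecidableEq ι] {J : Finset ι} {f : ι → α} {L : α}
    (h : ∀ i ∈ J, ∏ j ∈ J.erase i, f j ∣ L) : ∏ j ∈ J, f j ∣ J.gcd f * L := by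
  refine (gcd_mul_right' J f L).dvd_iff_dvd_right.mp (dvd_gcd fun i hi => ?_)
  rw [← mul_prod_erase J f hi]
  exact mul_dvd_mul_left _ (h i hi)

theorem prod_dvd_prod_insert_div_gcd [DecidableEq ι] {I : Finset ι} {j : ι} (s : ι → ℕ)
    (hj : j ∉ I) : ∏ i ∈ I, s i ∣ (∏ i ∈ insert j I, s i) / (insert j I).gcd s := by
  have he : (insert j I).gcd s ∣ s j := gcd_dvd (mem_insert_self j I)
  rw [prod_insert hj, Nat.dvd_div_iff_mul_dvd (dvd_mul_of_dvd_left he _)]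
  exact mul_dvd_mul_right he _

theorem prod_div_gcd_dvd_of_prod_erase_dvd [DecidableEq ι] {J : Finset ι} {s : ι → ℕ} {L : ℕ}
    (hJ : 0 < J.gcd s) (h : ∀ i ∈ J, ∏ j ∈ J.erase i, s j ∣ L) :
    (∏ j ∈ J, s j) / J.gcd s ∣ L := by
  obtain ⟨i, hi⟩ : J.Nonempty := nonempty_of_ne_empty fun hJe => by simp [hJe] at hJ
  rw [Nat.div_dvd_iff_dvd_mul ((gcd_dvd hi).trans (dvd_prod_of_mem s hi)) hJ]
  simpa using prod_dvd_gcd_mul_of_prod_erase_dvd h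

end Finset

open Finset in
theorem L_eq_lcm_div_gcd (k : ℕ) (s : Fin k → ℕ) (hs : ∀ i, 0 < s i)
    (t : ℕ) (h1 : 1 ≤ t) (h2 : t ≤ k - 1) :
    ((Finset.univ : Finset (Fin k)).powersetCard t).lcm (fun I => ∏ i ∈ I, s i) =
      ((Finset.univ : Finset (Fin k)).powersetCard (t + 1)).lcm
        (fun J => (∏ i ∈ J, s i) / J.gcd s) := by
  apply Nat.dvd_antisymm
  · refine lcm_dvd fun I hI => ?_
    rw [mem_powersetCard_univ] at hI
    obtain ⟨j, -, hj⟩ := exists_mem_notMem_of_card_lt_card (s := I) (t := univ)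
      (by rw [hI, card_univ, Fintype.card_fin]; omega)
    refine (prod_dvd_prod_insert_div_gcd s hj).trans (dvd_lcm ?_)
    rw [mem_powersetCard_univ, card_insert_of_notMem hj, hI]
  · refine lcm_dvd fun J hJ => ?_
    rw [mem_powersetCard_univ] at hJ
    obtain ⟨i, hi⟩ : J.Nonempty := card_pos.mp (by omega)
    have he : 0 < J.gcd s := Nat.pos_of_dvd_of_pos (gcd_dvd hi) (hs i)
    refine prod_div_gcd_dvd_of_prod_erase_dvd he fun i hi => dvd_lcm ?_
    rw [mem_powersetCard_univ, card_erase_of_mem hi, hJ, Nat.add_sub_cancel]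
end

section
/- Let s_1, ..., s_k be positive integers, and suppose t satisfies 1 ≤ t ≤ k-1 and gcd(s_i : i ∈ J) = 1 for every subset J of {1,...,k} with |J| = t+1. Then L_t = L_{t+1}, where L_t = lcm over t-element subsets I of ∏_{i∈I} s_i. -/
/-!
Every `t`-subset extends to a `(t+1)`-subset, so `L_t ∣ L_{t+1}`. Conversely, for a
`(t+1)`-subset `J` with product `P`, each `P / s_i` (`i ∈ J`) is a product over a `t`-subset,
hence divides `L_t`; so `P ∣ s_i · L_t` for all `i ∈ J`, and therefore
`P ∣ gcd_{i ∈ J} (s_i · L_t) = gcd_{i ∈ J}(s_i) · L_t = L_t`.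
-/

open Finset

variable {ι α : Type*} [CommMonoidWithZero α] [StrongNormalizedGCDMonoid α]

/-- The `L_t` of the statement, over an arbitrary index set `S`. -/
def lcmProdPowersetCard (S : Finset ι) (f : ι → α) (t : ℕ) : α :=
  (S.powersetCard t).lcm fun I => ∏ i ∈ I, f i

theorem prod_dvd_lcmProdPowersetCard {S I : Finset ι} {f : ι → α} {t : ℕ}
    (hI : I ∈ S.powersetCard t) : ∏ i ∈ I, f i ∣ lcmProdPowersetCard S f t :=
  dvd_lcm hI

theorem prod_dvd_mul_gcd_of_prod_erase_dvd [DecidableEq ι] {J : Finset ι} {f : ι → α} {M : α}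
    (h : ∀ i ∈ J, ∏ j ∈ J.erase i, f j ∣ M) : ∏ i ∈ J, f i ∣ M * J.gcd f := by
  have hdvd : ∏ i ∈ J, f i ∣ J.gcd fun i => M * f i := by
    refine Finset.dvd_gcd fun i hi => ?_
    rw [← mul_prod_erase J f hi, mul_comm M]
    exact mul_dvd_mul_left _ (h i hi)
  rw [Finset.gcd_mul_left] at hdvd
  exact hdvd.trans (mul_dvd_mul_right (normalize_associated M).dvd _)

theorem lcmProdPowersetCard_dvd_succ {S : Finset ι} {f : ι → α} {t : ℕ} (ht : t + 1 ≤ #S) :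
    lcmProdPowersetCard S f t ∣ lcmProdPowersetCard S f (t + 1) := by
  refine Finset.lcm_dvd fun I hI => ?_
  obtain ⟨hIS, hIcard⟩ := mem_powersetCard.mp hI
  obtain ⟨J, hIJ, hJS, hJcard⟩ := exists_subsuperset_card_eq hIS (by omega) ht
  exact (prod_dvd_prod_of_subset I J f hIJ).trans
    (prod_dvd_lcmProdPowersetCard (mem_powersetCard.mpr ⟨hJS, hJcard⟩))

theorem lcmProdPowersetCard_succ_dvd {S : Finset ι} {f : ι → α} {t : ℕ}
    (hgcd : ∀ J ∈ S.powersetCard (t + 1), J.gcd f = 1) :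
    lcmProdPowersetCard S f (t + 1) ∣ lcmProdPowersetCard S f t := by
  classical
  refine Finset.lcm_dvd fun J hJ => ?_
  obtain ⟨hJS, hJcard⟩ := mem_powersetCard.mp hJ
  have hprod := prod_dvd_mul_gcd_of_prod_erase_dvd (J := J) (f := f)
    (M := lcmProdPowersetCard S f t) fun i hi => prod_dvd_lcmProdPowersetCard <|
      mem_powersetCard.mpr ⟨(erase_subset i J).trans hJS, by rw [card_erase_of_mem hi, hJcard]; rfl⟩
  rwa [hgcd J hJ, mul_one] at hprod

theorem L_eq_L_succ_of_gcd_one_general (k : ℕ) (s : Fin k → ℕ)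
    (t : ℕ) (h1 : 1 ≤ t) (h2 : t ≤ k - 1)
    (hgcd : ∀ J : Finset (Fin k), J.card = t + 1 → J.gcd s = 1) :
    ((Finset.univ : Finset (Fin k)).powersetCard t).lcm (fun I => ∏ i ∈ I, s i) =
      ((Finset.univ : Finset (Fin k)).powersetCard (t + 1)).lcm (fun I => ∏ i ∈ I, s i) :=
  Nat.dvd_antisymm
    (lcmProdPowersetCard_dvd_succ (by rw [card_univ, Fintype.card_fin]; omega))
    (lcmProdPowersetCard_succ_dvd fun J hJ => hgcd J (mem_powersetCard.mp hJ).2)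

theorem L_eq_L_succ_of_gcd_one (k : ℕ) (s : Fin k → ℕ) (hs : ∀ i, 0 < s i)
    (t : ℕ) (h1 : 1 ≤ t) (h2 : t ≤ k - 1)
    (hgcd : ∀ J : Finset (Fin k), J.card = t + 1 → J.gcd s = 1) :
    ((Finset.univ : Finset (Fin k)).powersetCard t).lcm (fun I => ∏ i ∈ I, s i) =
      ((Finset.univ : Finset (Fin k)).powersetCard (t + 1)).lcm (fun I => ∏ i ∈ I, s i) :=
  L_eq_L_succ_of_gcd_one_general k s t h1 h2 hgcd
end

section
/- Let s_1, ..., s_k be positive integers and define d = max{|I| : I ⊆ {1,...,k}, gcd(s_i : i ∈ I) > 1} (with d = 0 if no such I exists, but assume here some s_i > 1 so d ≥ 1). If 1 ≤ t < d, then L_t < L_{t+1}, where L_t = lcm over t-element subsets I of ∏_{i∈I} s_i. -/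
/-!
Pick a set `J` of more than `t` indices whose `s_j` share a prime factor `p`, and a `t`-set `A`
on which the `p`-adic valuation of `∏_{i ∈ A} s_i` is maximal, i.e. equals that of `L_t`.
Some `j ∈ J` lies outside `A`, and `A ∪ {j}` has strictly larger `p`-adic valuation, so
`v_p(L_t) < v_p(L_{t+1})`. Since every `t`-set extends to a `(t+1)`-set, `L_t ∣ L_{t+1}`,
hence `L_t < L_{t+1}`.
-/

namespace Finset

variable {ι : Type*}

/-- The quantity `L_t`. -/
def lcmProdPowersetCard (S : Finset ι) (s : ι → ℕ) (t : ℕ) : ℕ :=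
  (S.powersetCard t).lcm fun I => ∏ i ∈ I, s i

variable {S A : Finset ι} {s : ι → ℕ} {t : ℕ}

theorem prod_ne_zero_of_mem_powersetCard (hs : ∀ i ∈ S, s i ≠ 0) (hA : A ∈ S.powersetCard t) :
    ∏ i ∈ A, s i ≠ 0 :=
  prod_ne_zero_iff.mpr fun i hi => hs i ((mem_powersetCard.mp hA).1 hi)

theorem lcmProdPowersetCard_ne_zero (hs : ∀ i ∈ S, s i ≠ 0) :
    S.lcmProdPowersetCard s t ≠ 0 := by
  rw [lcmProdPowersetCard, Ne, lcm_eq_zero_iff, not_exists]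
  rintro A ⟨hA, hzero⟩
  exact prod_ne_zero_of_mem_powersetCard hs hA hzero

variable [DecidableEq ι]

theorem insert_mem_powersetCard_succ {j : ι} (hA : A ∈ S.powersetCard t) (hjS : j ∈ S)
    (hjA : j ∉ A) : insert j A ∈ S.powersetCard (t + 1) := by
  rw [mem_powersetCard] at hA ⊢
  exact ⟨insert_subset hjS hA.1, by rw [card_insert_of_notMem hjA, hA.2]⟩

theorem lcmProdPowersetCard_dvd_succ (ht : t < S.card) :
    S.lcmProdPowersetCard s t ∣ S.lcmProdPowersetCard s (t + 1) := by
  refine lcm_dvd fun A hA => ?_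
  obtain ⟨j, hjS, hjA⟩ :=
    exists_mem_notMem_of_card_lt_card ((mem_powersetCard.mp hA).2.symm ▸ ht)
  have hprod : ∏ i ∈ A, s i ∣ ∏ i ∈ insert j A, s i := by
    rw [prod_insert hjA]
    exact dvd_mul_left _ _
  exact hprod.trans (dvd_lcm (insert_mem_powersetCard_succ hA hjS hjA))

theorem factorization_lcmProdPowersetCard_lt_succ {J : Finset ι} {p : ℕ}
    (hs : ∀ i ∈ S, s i ≠ 0) (hp : p.Prime) (hJS : J ⊆ S) (hJ : ∀ j ∈ J, p ∣ s j)
    (ht : t < J.card) :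
    (S.lcmProdPowersetCard s t).factorization p <
      (S.lcmProdPowersetCard s (t + 1)).factorization p := by
  rw [lcmProdPowersetCard, lcmProdPowersetCard,
    factorization_lcm fun _ => prod_ne_zero_of_mem_powersetCard hs,
    factorization_lcm fun _ => prod_ne_zero_of_mem_powersetCard hs]
  have hne : (S.powersetCard t).Nonempty :=
    powersetCard_nonempty.mpr (ht.le.trans (card_le_card hJS))
  obtain ⟨A, hA, hAmax⟩ :=
    exists_mem_eq_sup _ hne fun A => (∏ i ∈ A, s i).factorization p
  obtain ⟨j, hjJ, hjA⟩ :=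
    exists_mem_notMem_of_card_lt_card ((mem_powersetCard.mp hA).2.symm ▸ ht)
  have hsj : 0 < (s j).factorization p :=
    hp.factorization_pos_of_dvd (hs j (hJS hjJ)) (hJ j hjJ)
  calc (S.powersetCard t).sup (fun A => (∏ i ∈ A, s i).factorization p)
      = (∏ i ∈ A, s i).factorization p := hAmax
    _ < (s j).factorization p + (∏ i ∈ A, s i).factorization p := by omega
    _ = (∏ i ∈ insert j A, s i).factorization p := by
      rw [prod_insert hjA,
        Nat.factorization_mul (hs j (hJS hjJ)) (prod_ne_zero_of_mem_powersetCard hs hA)]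
      rfl
    _ ≤ (S.powersetCard (t + 1)).sup fun A => (∏ i ∈ A, s i).factorization p :=
      le_sup (f := fun A => (∏ i ∈ A, s i).factorization p)
        (insert_mem_powersetCard_succ hA (hJS hjJ) hjA)

theorem lcmProdPowersetCard_lt_succ {J : Finset ι} {p : ℕ}
    (hs : ∀ i ∈ S, s i ≠ 0) (hp : p.Prime) (hJS : J ⊆ S) (hJ : ∀ j ∈ J, p ∣ s j)
    (ht : t < J.card) :
    S.lcmProdPowersetCard s t < S.lcmProdPowersetCard s (t + 1) := by
  have hdvd := lcmProdPowersetCard_dvd_succ (s := s) (ht.trans_le (card_le_card hJS))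
  have hlt := factorization_lcmProdPowersetCard_lt_succ hs hp hJS hJ ht
  exact lt_of_le_of_ne (Nat.le_of_dvd (Nat.pos_of_ne_zero (lcmProdPowersetCard_ne_zero hs))
    hdvd) fun heq => hlt.ne (by rw [heq])

end Finset

theorem L_lt_L_succ_of_lt_d_general (k : ℕ) (s : Fin k → ℕ) (hs : ∀ i, 0 < s i)
    (d : ℕ)
    (hd : d = (((Finset.univ : Finset (Fin k)).powerset.filter
      (fun I => 1 < I.gcd s)).sup Finset.card))
    (t : ℕ) (htd : t < d) :
    ((Finset.univ : Finset (Fin k)).powersetCard t).lcm (fun I => ∏ i ∈ I, s i) <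
      ((Finset.univ : Finset (Fin k)).powersetCard (t + 1)).lcm (fun I => ∏ i ∈ I, s i) := by
  obtain ⟨J, hJ, htJ⟩ := Finset.lt_sup_iff.mp (hd ▸ htd)
  obtain ⟨p, hp, hpJ⟩ :=
    Nat.exists_prime_and_dvd (Finset.mem_filter.mp hJ).2.ne'
  exact Finset.lcmProdPowersetCard_lt_succ (fun i _ => (hs i).ne') hp (Finset.subset_univ J)
    (fun j hj => hpJ.trans (Finset.gcd_dvd hj)) htJ

theorem L_lt_L_succ_of_lt_d (k : ℕ) (s : Fin k → ℕ) (hs : ∀ i, 0 < s i)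
    (hex : ∃ i, 1 < s i) (d : ℕ)
    (hd : d = (((Finset.univ : Finset (Fin k)).powerset.filter
      (fun I => 1 < I.gcd s)).sup Finset.card))
    (t : ℕ) (h1 : 1 ≤ t) (htd : t < d) :
    ((Finset.univ : Finset (Fin k)).powersetCard t).lcm (fun I => ∏ i ∈ I, s i) <
      ((Finset.univ : Finset (Fin k)).powersetCard (t + 1)).lcm (fun I => ∏ i ∈ I, s i) :=
  L_lt_L_succ_of_lt_d_general k s hs d hd t htd
end

section
/- Let s_1, ..., s_k be positive integers, at least one greater than 1, and let d = max{|I| : I ⊆ {1,...,k} nonempty, gcd(s_i : i ∈ I) > 1}. Then for 1 ≤ t ≤ k: L_t = L_k if and only if t ≥ d, where L_t = lcm over t-element subsets I of ∏_{i∈I} s_i. -/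
/-!
For a prime `p` let `T_p = {i | p ∣ s i}`. Every product over a `t`-subset divides `∏ i, s i`,
so `L_t = L_k` exactly when, for every prime `p`, some `t`-subset `J` carries the full `p`-adic
valuation of `∏ i, s i`, i.e. `T_p ⊆ J`; such a `J` exists iff `#T_p ≤ t`. On the other side,
`d = max_p #T_p`, because `1 < I.gcd s` holds exactly when `I` is a nonempty subset of some `T_p`.
-/

open Finset

namespace Nat

theorem factorization_finset_lcm {α : Type*} {S : Finset α} {f : α → ℕ}
    (hf : ∀ a ∈ S, f a ≠ 0) (p : ℕ) :
    (S.lcm f).factorization p = S.sup fun a => (f a).factorization p := by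
  classical
  induction S using Finset.induction with
  | empty => simp
  | insert a S _ ih =>
    rw [forall_mem_insert] at hf
    rw [lcm_insert, sup_insert, ← ih hf.2]
    exact congrArg (· p) (factorization_lcm hf.1 (lcm_ne_zero_iff.2 hf.2))

theorem finset_lcm_eq_iff_forall_prime {α : Type*} {S : Finset α} (hS : S.Nonempty)
    {f : α → ℕ} {N : ℕ} (hN : N ≠ 0) (hf : ∀ a ∈ S, f a ∣ N) :
    S.lcm f = N ↔ ∀ p, p.Prime → ∃ a ∈ S, (f a).factorization p = N.factorization p := by
  have hf0 : ∀ a ∈ S, f a ≠ 0 := fun a ha h0 => hN (Nat.eq_zero_of_zero_dvd (h0 ▸ hf a ha))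
  have hle : ∀ a ∈ S, (f a).factorization ≤ N.factorization := fun a ha =>
    (factorization_le_iff_dvd (hf0 a ha) hN).2 (hf a ha)
  calc S.lcm f = N ↔ N ∣ S.lcm f :=
        ⟨fun h => h ▸ dvd_rfl, Nat.dvd_antisymm (Finset.lcm_dvd hf)⟩
    _ ↔ ∀ p, p.Prime → N.factorization p ≤ (S.lcm f).factorization p :=
      (factorization_prime_le_iff_dvd hN (lcm_ne_zero_iff.2 hf0)).symm
    _ ↔ _ := by
      refine forall₂_congr fun p _ => ?_
      obtain ⟨a, ha, hsup⟩ := exists_mem_eq_sup S hS fun a => (f a).factorization p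
      rw [factorization_finset_lcm hf0, hsup]
      exact ⟨fun h => ⟨a, ha, (hle a ha p).antisymm h⟩,
        fun ⟨b, hb, hbN⟩ => hsup ▸ hbN ▸ le_sup (f := fun a => (f a).factorization p) hb⟩

theorem factorization_prod_eq_factorization_prod_univ_iff {ι : Type*} [Fintype ι]
    {s : ι → ℕ} (hs : ∀ i, s i ≠ 0) {p : ℕ} (hp : p.Prime) (J : Finset ι) :
    (∏ i ∈ J, s i).factorization p = (∏ i, s i).factorization p ↔
      ({i | p ∣ s i} : Finset ι) ⊆ J := by
  classical
  simp only [factorization_prod fun i _ => hs i, Finsupp.finsetSum_apply]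
  rw [← sum_sdiff (subset_univ J), right_eq_add, sum_eq_zero_iff]
  simp [factorization_eq_zero_iff, hp, hs, subset_iff, not_imp_comm]

end Nat

theorem Finset.exists_superset_mem_powersetCard_iff {α : Type*} {s u : Finset α} {n : ℕ}
    (hsu : s ⊆ u) (hn : n ≤ #u) : (∃ J ∈ u.powersetCard n, s ⊆ J) ↔ #s ≤ n := by
  refine ⟨fun ⟨J, hJ, hsJ⟩ => (mem_powersetCard.1 hJ).2 ▸ card_le_card hsJ, fun hs => ?_⟩
  obtain ⟨J, hsJ, hJu, hJ⟩ := exists_subsuperset_card_eq hsu hs hn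
  exact ⟨J, mem_powersetCard.2 ⟨hJu, hJ⟩, hsJ⟩

theorem sup_card_filter_one_lt_gcd_le_iff {ι : Type*} [Fintype ι] {s : ι → ℕ}
    (hs : ∀ i, s i ≠ 0) (t : ℕ) :
    ((univ : Finset ι).powerset.filter (fun I => 1 < I.gcd s)).sup card ≤ t ↔
      ∀ p, p.Prime → #({i | p ∣ s i} : Finset ι) ≤ t := by
  simp only [Finset.sup_le_iff, mem_filter, mem_powerset, subset_univ, true_and]
  constructor
  · intro h p hp
    rcases ({i | p ∣ s i} : Finset ι).eq_empty_or_nonempty with hT | ⟨i, hi⟩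
    · simp [hT]
    · refine h _ (hp.one_lt.trans_le (Nat.le_of_dvd (Nat.pos_of_ne_zero fun h0 => ?_) ?_))
      · exact hs i (gcd_eq_zero_iff.1 h0 i hi)
      · exact Finset.dvd_gcd fun j hj => (mem_filter.1 hj).2
  · intro h I hI
    obtain ⟨p, hp, hpI⟩ := Nat.exists_prime_and_dvd hI.ne'
    exact (card_le_card fun i hi => mem_filter.2 ⟨mem_univ i, hpI.trans (gcd_dvd hi)⟩).trans
      (h p hp)

theorem L_eq_L_k_iff_general (k : ℕ) (s : Fin k → ℕ) (hs : ∀ i, 0 < s i)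
    (d : ℕ)
    (hd : d = (((Finset.univ : Finset (Fin k)).powerset.filter
      (fun I => 1 < I.gcd s)).sup Finset.card))
    (t : ℕ) (h2 : t ≤ k) :
    ((Finset.univ : Finset (Fin k)).powersetCard t).lcm (fun I => ∏ i ∈ I, s i) =
      (∏ i, s i) ↔ d ≤ t := by
  have hs0 : ∀ i, s i ≠ 0 := fun i => (hs i).ne'
  have htk : t ≤ #(univ : Finset (Fin k)) := by simpa using h2
  rw [hd, sup_card_filter_one_lt_gcd_le_iff hs0,
    Nat.finset_lcm_eq_iff_forall_prime (powersetCard_nonempty.2 htk)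
      (prod_ne_zero_iff.2 fun i _ => hs0 i)
      fun I _ => prod_dvd_prod_of_subset _ _ _ (subset_univ I)]
  refine forall₂_congr fun p hp => ?_
  simp only [Nat.factorization_prod_eq_factorization_prod_univ_iff hs0 hp]
  exact exists_superset_mem_powersetCard_iff (subset_univ _) htk

theorem L_eq_L_k_iff (k : ℕ) (s : Fin k → ℕ) (hs : ∀ i, 0 < s i)
    (hex : ∃ i, 1 < s i) (d : ℕ)
    (hd : d = (((Finset.univ : Finset (Fin k)).powerset.filter
      (fun I => 1 < I.gcd s)).sup Finset.card))
    (t : ℕ) (h1 : 1 ≤ t) (h2 : t ≤ k) :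
    ((Finset.univ : Finset (Fin k)).powersetCard t).lcm (fun I => ∏ i ∈ I, s i) =
      (∏ i, s i) ↔ d ≤ t :=
  L_eq_L_k_iff_general k s hs d hd t h2
end
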